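/- arXiv:1505.04315 — 7 statements merged into one kernel-verified Lean document; each statement's English description precedes it below -/
import Mathlib

section
/- Suppose f : ℝⁿ → ℝ is continuously differentiable and λ-strongly convex with L-Lipschitz gradient (0 < λ, L), μ > 0, φ(x) = f(x) + μ‖x‖₁, and x⋆ is a global minimizer of φ. If a sequence {x^k} ⊂ ℝⁿ satisfies φ(x^{k+1}) ≤ Γ(x^k) for every k ≥ 0, then for all k ≥ 0 one has φ(x^k) − φ(x⋆) ≤ (1 − λ/L)^k (φ(x⁰) − φ(x⋆)); in particular φ(x^k) converges to φ(x⋆) at a linear rate. -/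
/-!
Write `t = λ / L` and compare the proximal model at `xᵏ` with its value at
`y = t • x⋆ + (1 - t) • xᵏ`. The first-order inequality of strong convexity bounds the model by
`φ y + (L - λ) / 2 * ‖y - xᵏ‖²`, and strong convexity of `φ` bounds `φ y` by
`t φ(x⋆) + (1 - t) φ(xᵏ) - λ / 2 * t (1 - t) ‖x⋆ - xᵏ‖²`. Since `‖y - xᵏ‖ = t ‖x⋆ - xᵏ‖`, the two
quadratic terms cancel exactly for this `t`, so `φ(xᵏ⁺¹) - φ(x⋆) ≤ (1 - t) (φ(xᵏ) - φ(x⋆))`.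
Testing strong monotonicity of the gradient against its Lipschitz bound gives `λ ≤ L`, i.e. `t ≤ 1`.
-/

open scoped InnerProductSpace
open Set

variable {E : Type*} [NormedAddCommGroup E] [InnerProductSpace ℝ E] {f : E → ℝ} {m : ℝ}

theorem ConvexOn.add_apply_sub_le_of_hasFDerivAt {g : E → ℝ} {g' : E →L[ℝ] ℝ} {x : E}
    (hg : ConvexOn ℝ univ g) (hg' : HasFDerivAt g g' x) (y : E) :
    g x + g' (y - x) ≤ g y := by
  have hline : ConvexOn ℝ univ (g ∘ AffineMap.lineMap (k := ℝ) x y) := hg.comp_affineMap _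
  have hd : HasDerivAt (g ∘ AffineMap.lineMap (k := ℝ) x y) (g' (y - x)) 0 :=
    hg'.comp_hasDerivAt_of_eq 0 AffineMap.hasDerivAt_lineMap (by simp)
  have := hline.le_slope_of_hasDerivAt (mem_univ 0) (mem_univ 1) zero_lt_one hd
  simp only [slope_def_field, Function.comp_apply, AffineMap.lineMap_apply_zero,
    AffineMap.lineMap_apply_one, sub_zero, div_one] at this
  linarith

theorem StrongConvexOn.add_convexOn {g : E → ℝ} (hf : StrongConvexOn univ m f)
    (hg : ConvexOn ℝ univ g) : StrongConvexOn univ m (f + g) := by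
  unfold StrongConvexOn at *
  simpa only [add_zero] using hf.add hg.uniformConvexOn_zero

variable [CompleteSpace E]

theorem StrongConvexOn.add_inner_add_le_of_hasGradientAt {f' x : E}
    (hf : StrongConvexOn univ m f) (hf' : HasGradientAt f f' x) (y : E) :
    f x + ⟪f', y - x⟫_ℝ + m / 2 * ‖y - x‖ ^ 2 ≤ f y := by
  have hd := hf'.hasFDerivAt.sub ((hasStrictFDerivAt_norm_sq x).hasFDerivAt.const_mul (m / 2))
  have := (strongConvexOn_iff_convex.1 hf).add_apply_sub_le_of_hasFDerivAt hd y
  have hsq : ‖y‖ ^ 2 = ‖x‖ ^ 2 + 2 * ⟪x, y - x⟫_ℝ + ‖y - x‖ ^ 2 := by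
    simpa using norm_add_sq_real x (y - x)
  simp only [sub_apply, InnerProductSpace.toDual_apply_apply,
    smul_apply, innerSL_apply_apply, smul_eq_mul, nsmul_eq_mul] at this
  linear_combination this - m / 2 * hsq

theorem StrongConvexOn.mul_norm_sub_sq_le_inner (hf : StrongConvexOn univ m f)
    (hd : Differentiable ℝ f) (x y : E) :
    m * ‖x - y‖ ^ 2 ≤ ⟪gradient f x - gradient f y, x - y⟫_ℝ := by
  have hx := hf.add_inner_add_le_of_hasGradientAt (hd x).hasGradientAt y
  have hy := hf.add_inner_add_le_of_hasGradientAt (hd y).hasGradientAt x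
  rw [norm_sub_rev] at hx
  rw [inner_sub_left, ← neg_sub x y, inner_neg_right] at *
  linarith

theorem StrongConvexOn.le_of_lipschitz_gradient [Nontrivial E] {L : ℝ}
    (hf : StrongConvexOn univ m f) (hd : Differentiable ℝ f)
    (hlip : ∀ x y, ‖gradient f x - gradient f y‖ ≤ L * ‖x - y‖) : m ≤ L := by
  obtain ⟨x, hx⟩ := exists_ne (0 : E)
  have hmono := hf.mul_norm_sub_sq_le_inner hd x 0
  have hlipx := hlip x 0
  rw [sub_zero] at hmono hlipx
  refine le_of_mul_le_mul_right ?_ (by positivity : 0 < ‖x‖ ^ 2)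
  calc m * ‖x‖ ^ 2 ≤ ⟪gradient f x - gradient f 0, x⟫_ℝ := hmono
    _ ≤ ‖gradient f x - gradient f 0‖ * ‖x‖ := real_inner_le_norm _ _
    _ ≤ L * ‖x‖ * ‖x‖ := by gcongr
    _ = L * ‖x‖ ^ 2 := by ring

noncomputable def proxModel (f g : E → ℝ) (L : ℝ) (a y : E) : ℝ :=
  f a + ⟪gradient f a, y - a⟫_ℝ + L / 2 * ‖y - a‖ ^ 2 + g y

variable {g : E → ℝ} {L : ℝ}

theorem proxModel_bddBelow (hL : 0 < L) (hg : ∀ y, 0 ≤ g y) (a : E) :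
    BddBelow (range (proxModel f g L a)) := by
  refine ⟨f a - ‖gradient f a‖ ^ 2 / (2 * L), ?_⟩
  rintro _ ⟨y, rfl⟩
  have hinner := neg_le_of_abs_le (abs_real_inner_le_norm (gradient f a) (y - a))
  have hsq : ‖gradient f a‖ * ‖y - a‖ - L / 2 * ‖y - a‖ ^ 2 ≤ ‖gradient f a‖ ^ 2 / (2 * L) := by
    rw [le_div_iff₀ (by positivity)]
    nlinarith [sq_nonneg (L * ‖y - a‖ - ‖gradient f a‖)]
  unfold proxModel
  linarith [hg y]

theorem proxModel_le_of_strongConvexOn {a : E} (hf : StrongConvexOn univ m f)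
    (hd : DifferentiableAt ℝ f a) (y : E) :
    proxModel f g L a y ≤ f y + g y + (L - m) / 2 * ‖y - a‖ ^ 2 := by
  have := hf.add_inner_add_le_of_hasGradientAt hd.hasGradientAt y
  unfold proxModel
  linarith

theorem iInf_proxModel_le {a : E} (hf : StrongConvexOn univ m f) (hd : DifferentiableAt ℝ f a)
    (hg : ConvexOn ℝ univ g) (hg₀ : ∀ y, 0 ≤ g y) (hm : 0 < m) (hmL : m ≤ L) (z : E) :
    ⨅ y, proxModel f g L a y ≤ (1 - m / L) * (f a + g a) + m / L * (f z + g z) := by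
  have hL : 0 < L := hm.trans_le hmL
  set t := m / L with ht
  have ht₀ : 0 ≤ t := by positivity
  have ht₁ : t ≤ 1 := div_le_one_of_le₀ hmL hL.le
  have hnorm : ‖(t • z + (1 - t) • a) - a‖ = t * ‖z - a‖ := by
    rw [show t • z + (1 - t) • a - a = t • (z - a) by module, norm_smul, Real.norm_of_nonneg ht₀]
  have hconv := (hf.add_convexOn hg).2 (mem_univ z) (mem_univ a) ht₀ (sub_nonneg.2 ht₁)
    (add_sub_cancel t 1)
  simp only [Pi.add_apply, smul_eq_mul] at hconv
  calc ⨅ y, proxModel f g L a y ≤ proxModel f g L a (t • z + (1 - t) • a) :=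
        ciInf_le (proxModel_bddBelow hL hg₀ a) _
    _ ≤ f (t • z + (1 - t) • a) + g (t • z + (1 - t) • a) + (L - m) / 2 * (t * ‖z - a‖) ^ 2 := by
        rw [← hnorm]; exact proxModel_le_of_strongConvexOn hf hd _
    _ ≤ t * (f z + g z) + (1 - t) * (f a + g a) - t * (1 - t) * (m / 2 * ‖z - a‖ ^ 2)
          + (L - m) / 2 * (t * ‖z - a‖) ^ 2 := by linarith
    _ = (1 - t) * (f a + g a) + t * (f z + g z) := by rw [ht]; field_simp; ring

theorem convexOn_univ_sum_abs {ι : Type*} [Fintype ι] :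
    ConvexOn ℝ univ (fun y : EuclideanSpace ℝ ι => ∑ i, |y i|) := by
  have := Finset.sum_induction (s := Finset.univ) (fun i (y : EuclideanSpace ℝ ι) => |y i|)
    (ConvexOn ℝ univ) (fun _ _ => ConvexOn.add) (convexOn_const 0 convex_univ)
    (fun i _ => (convexOn_univ_norm (E := ℝ)).comp_linearMap (EuclideanSpace.projₗ i))
  simpa [Finset.sum_fn] using this

theorem stmt_0_general {n : ℕ} (hn : 0 < n)
    (f : EuclideanSpace ℝ (Fin n) → ℝ)
    (lam L mu : ℝ) (hlam : 0 < lam) (hL : 0 < L) (hmu : 0 < mu)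
    (hf : ContDiff ℝ 1 f)
    (hsc : ∀ x y : EuclideanSpace ℝ (Fin n), ∀ t ∈ Set.Icc (0:ℝ) 1,
      f (t • x + (1 - t) • y)
        ≤ t * f x + (1 - t) * f y - lam / 2 * t * (1 - t) * ‖x - y‖ ^ 2)
    (hlip : ∀ x y : EuclideanSpace ℝ (Fin n),
      ‖gradient f x - gradient f y‖ ≤ L * ‖x - y‖)
    (φ : EuclideanSpace ℝ (Fin n) → ℝ)
    (hφ : ∀ x, φ x = f x + mu * ∑ i, |x i|)
    (Γ : EuclideanSpace ℝ (Fin n) → ℝ)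
    (hΓ : ∀ x, Γ x = ⨅ y : EuclideanSpace ℝ (Fin n),
      (f x + ⟪gradient f x, y - x⟫_ℝ + L / 2 * ‖y - x‖ ^ 2 + mu * ∑ i, |y i|))
    (xstar : EuclideanSpace ℝ (Fin n))
    (x : ℕ → EuclideanSpace ℝ (Fin n))
    (hseq : ∀ k : ℕ, φ (x (k + 1)) ≤ Γ (x k)) :
    ∀ k : ℕ, φ (x k) - φ xstar ≤ (1 - lam / L) ^ k * (φ (x 0) - φ xstar) := by
  have hd : Differentiable ℝ f := hf.differentiable one_ne_zero
  have hstrong : StrongConvexOn univ lam f := by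
    refine ⟨convex_univ, fun y _ z _ a b ha hb hab => ?_⟩
    obtain rfl : b = 1 - a := eq_sub_of_add_eq' hab
    have := hsc y z a ⟨ha, by linarith⟩
    simp only [smul_eq_mul]
    linarith
  have : Nonempty (Fin n) := ⟨⟨0, hn⟩⟩
  have hlamL : lam ≤ L := hstrong.le_of_lipschitz_gradient hd hlip
  have hstep (k : ℕ) : φ (x (k + 1)) - φ xstar ≤ (1 - lam / L) * (φ (x k) - φ xstar) := by
    have hmodel := iInf_proxModel_le (g := fun y => mu * ∑ i, |y i|) hstrong (hd (x k))
      (convexOn_univ_sum_abs.smul hmu.le) (fun y => by positivity) hlam hlamL xstar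
    have hnext : φ (x (k + 1)) ≤ ⨅ y, proxModel f (fun y => mu * ∑ i, |y i|) L (x k) y :=
      (hseq k).trans_eq (hΓ (x k))
    simp only [hφ] at hnext ⊢
    beta_reduce at hmodel
    linarith
  exact fun k => le_geom (u := fun k => φ (x k) - φ xstar)
    (sub_nonneg.2 (div_le_one_of_le₀ hlamL hL.le)) k fun j _ => hstep j

/-- Linear convergence of the objective values for any sequence whose
next iterate improves on the ISTA majorization value `Γ(x^k)` (the infimum of the
proximal model at `x^k`). -/
theorem stmt_0 {n : ℕ} (hn : 0 < n)
    (f : EuclideanSpace ℝ (Fin n) → ℝ)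
    (lam L mu : ℝ) (hlam : 0 < lam) (hL : 0 < L) (hmu : 0 < mu)
    (hf : ContDiff ℝ 1 f)
    (hsc : ∀ x y : EuclideanSpace ℝ (Fin n), ∀ t ∈ Set.Icc (0:ℝ) 1,
      f (t • x + (1 - t) • y)
        ≤ t * f x + (1 - t) * f y - lam / 2 * t * (1 - t) * ‖x - y‖ ^ 2)
    (hlip : ∀ x y : EuclideanSpace ℝ (Fin n),
      ‖gradient f x - gradient f y‖ ≤ L * ‖x - y‖)
    (φ : EuclideanSpace ℝ (Fin n) → ℝ)
    (hφ : ∀ x, φ x = f x + mu * ∑ i, |x i|)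
    (Γ : EuclideanSpace ℝ (Fin n) → ℝ)
    (hΓ : ∀ x, Γ x = ⨅ y : EuclideanSpace ℝ (Fin n),
      (f x + ⟪gradient f x, y - x⟫_ℝ + L / 2 * ‖y - x‖ ^ 2 + mu * ∑ i, |y i|))
    (xstar : EuclideanSpace ℝ (Fin n)) (hmin : ∀ y, φ xstar ≤ φ y)
    (x : ℕ → EuclideanSpace ℝ (Fin n))
    (hseq : ∀ k : ℕ, φ (x (k + 1)) ≤ Γ (x k)) :
    ∀ k : ℕ, φ (x k) - φ xstar ≤ (1 - lam / L) ^ k * (φ (x 0) - φ xstar) :=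
  stmt_0_general hn f lam L mu hlam hL hmu hf hsc hlip φ hφ Γ hΓ xstar x hseq
end

section
/- Suppose f : ℝⁿ → ℝ is continuously differentiable and λ-strongly convex with L-Lipschitz gradient (0 < λ, L), μ > 0, and φ(x) = f(x) + μ‖x‖₁. If x, x⁺ ∈ ℝⁿ satisfy φ(x⁺) ≤ Γ(x), then for every d ∈ ℝⁿ one has φ(x⁺) ≤ φ(x + (λ/L) d) + (λ²/(2L)) (1 − λ/L) ‖d‖₂². -/
/-!
The value `Γ(x)` is an infimum, so it is at most the proximal-gradient model evaluated at
`y = x + (λ/L) d`. Strong convexity yields the tangent bound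
`f x + ⟪∇f x, y - x⟫ + λ/2 ‖y - x‖² ≤ f y`, so the model at `y` exceeds `φ y` by at most
`(L - λ)/2 ‖y - x‖² = λ²/(2L) (1 - λ/L) ‖d‖²`.
-/

open scoped InnerProductSpace

open Set

section NormedSpace

variable {E : Type*} [NormedAddCommGroup E] [NormedSpace ℝ E] {f : E → ℝ} {f' : E →L[ℝ] ℝ}
  {m : ℝ} {x : E}

theorem StrongConvexOn.le_of_hasFDerivAt (hf : StrongConvexOn univ m f) (hx : HasFDerivAt f f' x)
    (y : E) : f x + f' (y - x) + m / 2 * ‖y - x‖ ^ 2 ≤ f y := by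
  -- `k ≤ 0 = k 0` on `[0, 1]` is the chord inequality along the segment from `x` to `y`;
  -- Fermat's rule at the endpoint `0` turns it into the tangent bound.
  set h := y - x
  set k : ℝ → ℝ := fun t ↦
    f (x + t • h) - f x - t * (f y - f x) + m / 2 * t * (1 - t) * ‖h‖ ^ 2
  have hk : HasDerivAt k (f' h - (f y - f x) + m / 2 * ‖h‖ ^ 2) 0 := by
    have hline : HasDerivAt (fun t : ℝ ↦ x + t • h) h 0 := by
      simpa using ((hasDerivAt_id (0 : ℝ)).smul_const h).const_add x
    have hfline := (by simpa using hx : HasFDerivAt f f' (x + (0 : ℝ) • h)).comp_hasDerivAt 0 hline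
    have hpoly := (((hasDerivAt_id' 0).const_mul (m / 2)).fun_mul
      ((hasDerivAt_id' 0).const_sub 1)).mul_const (‖h‖ ^ 2)
    have := ((hfline.sub_const (f x)).fun_sub ((hasDerivAt_id' 0).mul_const (f y - f x))).fun_add hpoly
    exact this.congr_deriv (by simp)
  have hmax : IsLocalMaxOn k (Icc 0 1) 0 := by
    refine Filter.eventually_of_mem self_mem_nhdsWithin fun t ht ↦ ?_
    have := hf.2 (mem_univ y) (mem_univ x) ht.1 (sub_nonneg.2 ht.2) (add_sub_cancel t 1)
    have hseg : t • y + (1 - t) • x = x + t • h := by module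
    simp only [hseg, smul_eq_mul] at this
    simp only [k, mul_zero, zero_mul, zero_smul, add_zero, sub_self]
    linarith
  have hcone : (1 : ℝ) ∈ posTangentConeAt (Icc 0 1) 0 :=
    mem_posTangentConeAt_of_segment_subset (by simp [segment_eq_Icc])
  have := hmax.hasFDerivWithinAt_nonpos hk.hasDerivWithinAt.hasFDerivWithinAt hcone
  simp only [ContinuousLinearMap.toSpanSingleton_apply, smul_eq_mul, one_mul] at this
  linarith

end NormedSpace

section InnerProductSpace

variable {F : Type*} [NormedAddCommGroup F] [InnerProductSpace ℝ F]

theorem StrongConvexOn.le_of_hasGradientAt [CompleteSpace F] {f : F → ℝ} {g x : F} {m : ℝ}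
    (hf : StrongConvexOn univ m f) (hx : HasGradientAt f g x) (y : F) :
    f x + ⟪g, y - x⟫_ℝ + m / 2 * ‖y - x‖ ^ 2 ≤ f y := by
  simpa using hf.le_of_hasFDerivAt hx.hasFDerivAt y

theorem neg_sq_norm_div_le_inner_add_sq_norm {L : ℝ} (hL : 0 < L) (v w : F) :
    -(‖v‖ ^ 2 / (2 * L)) ≤ ⟪v, w⟫_ℝ + L / 2 * ‖w‖ ^ 2 := by
  have hsq : 0 ≤ ‖v + L • w‖ ^ 2 := sq_nonneg _
  rw [norm_add_sq_real, real_inner_smul_right, norm_smul, Real.norm_eq_abs, abs_of_pos hL] at hsq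
  have hexpand : (‖v‖ ^ 2 + 2 * (L * ⟪v, w⟫_ℝ) + (L * ‖w‖) ^ 2) / (2 * L)
      = ‖v‖ ^ 2 / (2 * L) + (⟪v, w⟫_ℝ + L / 2 * ‖w‖ ^ 2) := by
    field_simp
    ring
  linarith [div_nonneg hsq (by positivity : (0 : ℝ) ≤ 2 * L)]

end InnerProductSpace

theorem stmt_2_general {n : ℕ}
    (f : EuclideanSpace ℝ (Fin n) → ℝ)
    (lam L mu : ℝ) (hL : 0 < L) (hmu : 0 < mu)
    (hf : ContDiff ℝ 1 f)
    (hsc : ∀ x y : EuclideanSpace ℝ (Fin n), ∀ t ∈ Set.Icc (0:ℝ) 1,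
      f (t • x + (1 - t) • y)
        ≤ t * f x + (1 - t) * f y - lam / 2 * t * (1 - t) * ‖x - y‖ ^ 2)
    (φ : EuclideanSpace ℝ (Fin n) → ℝ)
    (hφ : ∀ x, φ x = f x + mu * ∑ i, |x i|)
    (Γ : EuclideanSpace ℝ (Fin n) → ℝ)
    (hΓ : ∀ x, Γ x = ⨅ y : EuclideanSpace ℝ (Fin n),
      (f x + ⟪gradient f x, y - x⟫_ℝ + L / 2 * ‖y - x‖ ^ 2 + mu * ∑ i, |y i|))
    (x xplus : EuclideanSpace ℝ (Fin n)) (hstep : φ xplus ≤ Γ x) :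
    ∀ d : EuclideanSpace ℝ (Fin n),
      φ xplus ≤ φ (x + (lam / L) • d) + lam ^ 2 / (2 * L) * (1 - lam / L) * ‖d‖ ^ 2 := by
  intro d
  set y := x + (lam / L) • d
  have hstrong : StrongConvexOn univ lam f := ⟨convex_univ, fun u _ v _ a b ha hb hab ↦ by
    obtain rfl := eq_sub_of_add_eq' hab
    simpa [mul_assoc, mul_left_comm] using hsc u v a ⟨ha, by linarith⟩⟩
  have htangent := hstrong.le_of_hasGradientAt (hf.differentiable one_ne_zero x).hasGradientAt y
  have hbdd : BddBelow (range fun z : EuclideanSpace ℝ (Fin n) ↦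
      f x + ⟪gradient f x, z - x⟫_ℝ + L / 2 * ‖z - x‖ ^ 2 + mu * ∑ i, |z i|) := by
    refine ⟨f x - ‖gradient f x‖ ^ 2 / (2 * L), ?_⟩
    rintro _ ⟨z, rfl⟩
    have hquad := neg_sq_norm_div_le_inner_add_sq_norm hL (gradient f x) (z - x)
    have hl1 : 0 ≤ mu * ∑ i, |z i| := by positivity
    linarith
  have hstep_norm : ‖y - x‖ ^ 2 = (lam / L) ^ 2 * ‖d‖ ^ 2 := by
    rw [add_sub_cancel_left, norm_smul, mul_pow, Real.norm_eq_abs, sq_abs]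
  have hcoef : (L - lam) / 2 * (lam / L) ^ 2 = lam ^ 2 / (2 * L) * (1 - lam / L) := by
    field_simp
  calc φ xplus ≤ Γ x := hstep
    _ ≤ f x + ⟪gradient f x, y - x⟫_ℝ + L / 2 * ‖y - x‖ ^ 2 + mu * ∑ i, |y i| := by
      rw [hΓ x]
      exact ciInf_le hbdd y
    _ ≤ φ y + lam ^ 2 / (2 * L) * (1 - lam / L) * ‖d‖ ^ 2 := by
      rw [hφ y, ← hcoef, hstep_norm]
      rw [hstep_norm] at htangent
      linarith

/-- If `φ(x⁺) ≤ Γ(x)`, then for every direction `d`,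
`φ(x⁺) ≤ φ(x + (λ/L)d) + (λ²/(2L))(1 − λ/L)‖d‖₂²`. -/
theorem stmt_2 {n : ℕ} (hn : 0 < n)
    (f : EuclideanSpace ℝ (Fin n) → ℝ)
    (lam L mu : ℝ) (hlam : 0 < lam) (hL : 0 < L) (hmu : 0 < mu)
    (hf : ContDiff ℝ 1 f)
    (hsc : ∀ x y : EuclideanSpace ℝ (Fin n), ∀ t ∈ Set.Icc (0:ℝ) 1,
      f (t • x + (1 - t) • y)
        ≤ t * f x + (1 - t) * f y - lam / 2 * t * (1 - t) * ‖x - y‖ ^ 2)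
    (hlip : ∀ x y : EuclideanSpace ℝ (Fin n),
      ‖gradient f x - gradient f y‖ ≤ L * ‖x - y‖)
    (φ : EuclideanSpace ℝ (Fin n) → ℝ)
    (hφ : ∀ x, φ x = f x + mu * ∑ i, |x i|)
    (Γ : EuclideanSpace ℝ (Fin n) → ℝ)
    (hΓ : ∀ x, Γ x = ⨅ y : EuclideanSpace ℝ (Fin n),
      (f x + ⟪gradient f x, y - x⟫_ℝ + L / 2 * ‖y - x‖ ^ 2 + mu * ∑ i, |y i|))
    (x xplus : EuclideanSpace ℝ (Fin n)) (hstep : φ xplus ≤ Γ x) :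
    ∀ d : EuclideanSpace ℝ (Fin n),
      φ xplus ≤ φ (x + (lam / L) • d) + lam ^ 2 / (2 * L) * (1 - lam / L) * ‖d‖ ^ 2 :=
  stmt_2_general f lam L mu hL hmu hf hsc φ hφ Γ hΓ x xplus hstep
end

section
/- Let x, d ∈ ℝⁿ and let ζ ∈ ℝⁿ satisfy: ζᵢ = sign(xᵢ) for every i with xᵢ ≠ 0, and for every i with xᵢ = 0, either dᵢ = 0 or ζᵢ = sign(dᵢ). Then there exists ᾱ > 0 such that for every α with 0 < α ≤ ᾱ, the point x + α d is fixed by the orthant projection: P(x + α d) = x + α d. -/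
lemma sign_sign' (x : ℝ) : Real.sign (Real.sign x) = Real.sign x := by
  rcases lt_trichotomy x 0 with h | h | h <;>
    simp [Real.sign_of_neg, Real.sign_of_pos, h, Real.sign_of_neg (show (-1:ℝ) < 0 by norm_num),
      Real.sign_of_pos (show (0:ℝ) < 1 by norm_num)]

/-- The projection onto the orthant determined by `ζ`: `P(y)ᵢ = yᵢ` if
`sign(yᵢ) = sign(ζᵢ)` and `P(y)ᵢ = 0` otherwise. -/
noncomputable def orthantProj {n : ℕ} (ζ y : Fin n → ℝ) : Fin n → ℝ :=
  fun i => if Real.sign (y i) = Real.sign (ζ i) then y i else 0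

/-- If `ζ` agrees in sign with `x` on nonzero components and with
`d` on components where `x` vanishes (unless `dᵢ = 0`), then for all sufficiently
small positive step sizes `α`, the point `x + α d` is fixed by the orthant
projection. -/
theorem stmt_11 {n : ℕ} (hn : 0 < n) (x d ζ : Fin n → ℝ)
    (hζ1 : ∀ i, x i ≠ 0 → ζ i = Real.sign (x i))
    (hζ2 : ∀ i, x i = 0 → d i = 0 ∨ ζ i = Real.sign (d i)) :
    ∃ abar : ℝ, 0 < abar ∧ ∀ α : ℝ, 0 < α → α ≤ abar →
      orthantProj ζ (x + α • d) = x + α • d := by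
  haveI : Nonempty (Fin n) := ⟨⟨0, hn⟩⟩
  set f : Fin n → ℝ := fun i => if x i = 0 then 1 else |x i| / (|d i| + 1) with hf
  have hfpos : ∀ i, 0 < f i := by
    intro i
    by_cases h : x i = 0
    · simp [hf, h]
    · simp only [hf, h, if_false]
      exact div_pos (abs_pos.mpr h) (by positivity)
  refine ⟨Finset.univ.inf' Finset.univ_nonempty f, ?_, ?_⟩
  · exact (Finset.lt_inf'_iff _).mpr fun i _ => hfpos i
  · intro α hα hαle
    funext i
    have hαf : α ≤ f i := hαle.trans (Finset.inf'_le _ (Finset.mem_univ i))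
    simp only [orthantProj, Pi.add_apply, Pi.smul_apply, smul_eq_mul]
    by_cases hx : x i = 0
    · rcases hζ2 i hx with hd | hζ
      · simp [hx, hd]
      · have : Real.sign (x i + α * d i) = Real.sign (d i) := by
          rcases lt_trichotomy (d i) 0 with h | h | h
          · rw [Real.sign_of_neg h, Real.sign_of_neg]
            nlinarith
          · simp [hx, h]
          · rw [Real.sign_of_pos h, Real.sign_of_pos]
            nlinarith
        rw [this, hζ, if_pos (sign_sign' _).symm]
    · have hbound : |α * d i| < |x i| := by
        have hxpos : 0 < |x i| := abs_pos.mpr hx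
        have hαf' : α ≤ |x i| / (|d i| + 1) := by simpa [hf, hx] using hαf
        have h1 : α * (|d i| + 1) ≤ |x i| := by
          rw [← le_div_iff₀ (by positivity)]; exact hαf'
        rw [abs_mul, abs_of_pos hα]
        nlinarith [abs_nonneg (d i)]
      obtain ⟨h1, h2⟩ := abs_lt.mp hbound
      have : Real.sign (x i + α * d i) = Real.sign (x i) := by
        rcases lt_trichotomy (x i) 0 with h | h | h
        · rw [abs_of_neg h] at h2
          rw [Real.sign_of_neg h, Real.sign_of_neg (by linarith)]
        · exact absurd h hx
        · rw [abs_of_pos h] at h1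
          rw [Real.sign_of_pos h, Real.sign_of_pos (by linarith)]
      rw [this, hζ1 i hx, if_pos (sign_sign' _).symm]
end

section
/- Let H be a symmetric positive semidefinite n×n real matrix, let g, x, d ∈ ℝⁿ, μ > 0, and let ζ ∈ ℝⁿ satisfy: ζᵢ = sign(xᵢ) for every i with xᵢ ≠ 0, and for every i with xᵢ = 0, either dᵢ = 0 or ζᵢ = sign(dᵢ) with ζᵢ ∈ {−1, 1}. Define the smooth quadratic model q̄(y) = ⟨g, y − x⟩ + (1/2)⟨y − x, H(y − x)⟩ + μ⟨ζ, y⟩ and the nonsmooth model q(y) = ⟨g, y − x⟩ + (1/2)⟨y − x, H(y − x)⟩ + μ‖y‖₁. If q̄(x + d) ≤ q̄(x), then there exists j ∈ ℕ such that the backtracking projected line search condition holds at step size α = 2^{−j}: q(P(x + 2^{−j} d)) ≤ q(x). In other words, the backtracking projected line search terminates in a finite number of iterations. -/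
open Filter Topology Matrix

namespace Real

theorem sign_sign (r : ℝ) : sign (sign r) = sign r := by
  obtain hr | rfl | hr := lt_trichotomy r 0
  · rw [sign_of_neg hr, sign_neg, sign_one]
  · rw [sign_zero, sign_zero]
  · rw [sign_of_pos hr, sign_one]

theorem sign_mul_self (r : ℝ) : sign r * r = |r| := by
  obtain hr | rfl | hr := lt_trichotomy r 0
  · rw [sign_of_neg hr, abs_of_neg hr, neg_one_mul]
  · simp
  · rw [sign_of_pos hr, abs_of_pos hr, one_mul]

theorem sign_mul_of_pos {t : ℝ} (ht : 0 < t) (r : ℝ) : sign (t * r) = sign r := by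
  obtain hr | rfl | hr := lt_trichotomy r 0
  · rw [sign_of_neg (mul_neg_of_pos_of_neg ht hr), sign_of_neg hr]
  · rw [mul_zero]
  · rw [sign_of_pos (mul_pos ht hr), sign_of_pos hr]

theorem eventually_sign_eq {x : ℝ} (hx : x ≠ 0) : ∀ᶠ y in 𝓝 x, sign y = sign x := by
  obtain hx | hx := hx.lt_or_gt
  · filter_upwards [Iio_mem_nhds hx] with y hy
    rw [sign_of_neg hy, sign_of_neg hx]
  · filter_upwards [Ioi_mem_nhds hx] with y hy
    rw [sign_of_pos hy, sign_of_pos hx]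

end Real

theorem eventually_sign_add_mul {a b z : ℝ} (hne : a ≠ 0 → z = Real.sign a)
    (hzero : a = 0 → b = 0 ∨ z = Real.sign b) :
    ∀ᶠ t in 𝓝[>] 0, a + t * b = 0 ∨ Real.sign (a + t * b) = z := by
  by_cases ha : a = 0
  · subst ha
    rcases hzero rfl with rfl | hz
    · exact Eventually.of_forall fun t => Or.inl (by simp)
    · filter_upwards [self_mem_nhdsWithin] with t (ht : 0 < t)
      rw [zero_add, Real.sign_mul_of_pos ht, hz]
      exact Or.inr rfl
  · have hlim : Tendsto (fun t : ℝ => a + t * b) (𝓝[>] 0) (𝓝 a) :=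
      (Continuous.tendsto' (by fun_prop) 0 a (by simp)).mono_left nhdsWithin_le_nhds
    filter_upwards [hlim.eventually (Real.eventually_sign_eq ha)] with t ht
    exact Or.inr (ht.trans (hne ha).symm)

section Orthant

variable {ι : Type*}

def InOrthant (ζ y : ι → ℝ) : Prop :=
  ∀ i, y i = 0 ∨ Real.sign (y i) = ζ i

theorem InOrthant.sum_abs_eq [Fintype ι] {ζ y : ι → ℝ} (h : InOrthant ζ y) :
    ∑ i, |y i| = ∑ i, ζ i * y i := by
  refine Finset.sum_congr rfl fun i _ => ?_
  rcases h i with hy | hy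
  · simp [hy]
  · rw [← hy, Real.sign_mul_self]

theorem inOrthant_self_of_sign_eq {ζ x : ι → ℝ} (h : ∀ i, x i ≠ 0 → ζ i = Real.sign (x i)) :
    InOrthant ζ x :=
  fun i => (em (x i = 0)).imp_right fun hx => (h i hx).symm

theorem eventually_inOrthant_add_smul [Finite ι] {ζ x d : ι → ℝ}
    (hne : ∀ i, x i ≠ 0 → ζ i = Real.sign (x i))
    (hzero : ∀ i, x i = 0 → d i = 0 ∨ ζ i = Real.sign (d i)) :
    ∀ᶠ t : ℝ in 𝓝[>] 0, InOrthant ζ (x + t • d) :=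
  eventually_all.2 fun i => eventually_sign_add_mul (hne i) (hzero i)

end Orthant

theorem orthantProj_eq_self {n : ℕ} {ζ y : Fin n → ℝ} (h : InOrthant ζ y) :
    orthantProj ζ y = y := by
  funext i
  rcases h i with hy | hy
  · simp [orthantProj, hy]
  · simp [orthantProj, ← hy, Real.sign_sign]

section QuadModel

variable {ι : Type*} [Fintype ι]

noncomputable def quadModel (g : ι → ℝ) (H : Matrix ι ι ℝ) (x y : ι → ℝ) : ℝ :=
  g ⬝ᵥ (y - x) + 1 / 2 * ((y - x) ⬝ᵥ H *ᵥ (y - x))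

theorem quadModel_self (g : ι → ℝ) (H : Matrix ι ι ℝ) (x : ι → ℝ) : quadModel g H x x = 0 := by
  simp [quadModel]

theorem quadModel_add_dotProduct (g w : ι → ℝ) (H : Matrix ι ι ℝ) (x y : ι → ℝ) :
    quadModel g H x y + w ⬝ᵥ y = quadModel (g + w) H x y + w ⬝ᵥ x := by
  simp only [quadModel, add_dotProduct, dotProduct_sub]
  ring

theorem quadModel_add_smul (g : ι → ℝ) (H : Matrix ι ι ℝ) (x d : ι → ℝ) (t : ℝ) :
    quadModel g H x (x + t • d) = t * (g ⬝ᵥ d) + t ^ 2 / 2 * (d ⬝ᵥ H *ᵥ d) := by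
  simp only [quadModel, add_sub_cancel_left, mulVec_smul, dotProduct_smul, smul_dotProduct,
    smul_eq_mul]
  ring

theorem quadModel_add_smul_nonpos {g : ι → ℝ} {H : Matrix ι ι ℝ} (hH : H.PosSemidef)
    {x d : ι → ℝ} (hd : quadModel g H x (x + d) ≤ 0) {t : ℝ} (ht₀ : 0 ≤ t) (ht₁ : t ≤ 1) :
    quadModel g H x (x + t • d) ≤ 0 := by
  have hd' := quadModel_add_smul g H x d 1
  rw [one_smul] at hd'
  have hb : 0 ≤ d ⬝ᵥ H *ᵥ d := by simpa using hH.dotProduct_mulVec_nonneg d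
  rw [quadModel_add_smul]
  nlinarith [mul_nonneg (mul_nonneg ht₀ (sub_nonneg.2 ht₁)) hb]

end QuadModel

theorem stmt_12_general {n : ℕ}
    (H : Matrix (Fin n) (Fin n) ℝ) (hH : H.PosSemidef)
    (g x d ζ : Fin n → ℝ) (mu : ℝ)
    (hζ1 : ∀ i, x i ≠ 0 → ζ i = Real.sign (x i))
    (hζ2 : ∀ i, x i = 0 →
      d i = 0 ∨ (ζ i = Real.sign (d i) ∧ (ζ i = -1 ∨ ζ i = 1)))
    (qbar q : (Fin n → ℝ) → ℝ)
    (hqbar : ∀ y, qbar y = (∑ i, g i * (y i - x i))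
      + 1 / 2 * ∑ i, (y i - x i) * (H.mulVec (fun j => y j - x j)) i
      + mu * ∑ i, ζ i * y i)
    (hq : ∀ y, q y = (∑ i, g i * (y i - x i))
      + 1 / 2 * ∑ i, (y i - x i) * (H.mulVec (fun j => y j - x j)) i
      + mu * ∑ i, |y i|)
    (hdec : qbar (x + d) ≤ qbar x) :
    ∃ j : ℕ, q (orthantProj ζ (x + ((1 : ℝ) / 2) ^ j • d)) ≤ q x := by
  have hqbar' : ∀ y, qbar y = quadModel (g + mu • ζ) H x y + mu * (ζ ⬝ᵥ x) := fun y => by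
    rw [hqbar, ← smul_eq_mul mu (ζ ⬝ᵥ x), ← smul_dotProduct, ← quadModel_add_dotProduct,
      smul_dotProduct]
    rfl
  have hsteps : Tendsto (fun j : ℕ => ((1 : ℝ) / 2) ^ j) atTop (𝓝[>] 0) :=
    tendsto_nhdsWithin_iff.2 ⟨tendsto_pow_atTop_nhds_zero_of_lt_one (by norm_num) (by norm_num),
      Eventually.of_forall fun j => pow_pos (by norm_num : (0 : ℝ) < 1 / 2) j⟩
  obtain ⟨j, hj⟩ := (hsteps.eventually (eventually_inOrthant_add_smul hζ1
    fun i hx => (hζ2 i hx).imp_right And.left)).exists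
  refine ⟨j, ?_⟩
  rw [orthantProj_eq_self hj, hq, hq, hj.sum_abs_eq, (inOrthant_self_of_sign_eq hζ1).sum_abs_eq,
    ← hqbar, ← hqbar, hqbar', hqbar', quadModel_self, add_le_add_iff_right]
  rw [hqbar', hqbar', quadModel_self, add_le_add_iff_right] at hdec
  exact quadModel_add_smul_nonpos hH hdec (pow_nonneg (by norm_num) j)
    (pow_le_one₀ (by norm_num) (by norm_num))

/-- finite termination of the backtracking projected line search.
If `H` is symmetric positive semidefinite, `ζ` identifies the orthant face of
`x` and `d` as described, and the smooth model `q̄` satisfies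
`q̄(x + d) ≤ q̄(x)`, then for some `j ∈ ℕ` the step size `α = 2^{−j}` satisfies
`q(P(x + α d)) ≤ q(x)`, where `q` is the nonsmooth model. -/
theorem stmt_12 {n : ℕ} (hn : 0 < n)
    (H : Matrix (Fin n) (Fin n) ℝ) (hH : H.PosSemidef)
    (g x d ζ : Fin n → ℝ) (mu : ℝ) (hmu : 0 < mu)
    (hζ1 : ∀ i, x i ≠ 0 → ζ i = Real.sign (x i))
    (hζ2 : ∀ i, x i = 0 →
      d i = 0 ∨ (ζ i = Real.sign (d i) ∧ (ζ i = -1 ∨ ζ i = 1)))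
    (qbar q : (Fin n → ℝ) → ℝ)
    (hqbar : ∀ y, qbar y = (∑ i, g i * (y i - x i))
      + 1 / 2 * ∑ i, (y i - x i) * (H.mulVec (fun j => y j - x j)) i
      + mu * ∑ i, ζ i * y i)
    (hq : ∀ y, q y = (∑ i, g i * (y i - x i))
      + 1 / 2 * ∑ i, (y i - x i) * (H.mulVec (fun j => y j - x j)) i
      + mu * ∑ i, |y i|)
    (hdec : qbar (x + d) ≤ qbar x) :
    ∃ j : ℕ, q (orthantProj ζ (x + ((1 : ℝ) / 2) ^ j • d)) ≤ q x :=
  stmt_12_general H hH g x d ζ mu hζ1 hζ2 qbar q hqbar hq hdec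
end

section
/- Let x, d ∈ ℝⁿ and let ζ ∈ ℝⁿ satisfy: ζᵢ = sign(xᵢ) for every i with xᵢ ≠ 0, and for every i with xᵢ = 0, either dᵢ = 0 or ζᵢ = sign(dᵢ) with ζᵢ ∈ {−1, 1}. Then there exists ᾱ > 0 such that for every α with 0 < α ≤ ᾱ, the ℓ₁-norm is linear along the step: ‖x + α d‖₁ = ⟨ζ, x + α d⟩, and also ‖x‖₁ = ⟨ζ, x⟩. -/
/-- If `ζ` agrees in sign with `x` on nonzero components and with
`d` (with `ζᵢ ∈ {−1,1}`) on components where `x` vanishes unless `dᵢ = 0`,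
then for all sufficiently small positive step sizes `α`, the ℓ₁-norm is
linear along the step: `‖x + αd‖₁ = ⟨ζ, x + αd⟩`, and also `‖x‖₁ = ⟨ζ, x⟩`. -/
theorem stmt_13 {n : ℕ} (hn : 0 < n) (x d ζ : Fin n → ℝ)
    (hζ1 : ∀ i, x i ≠ 0 → ζ i = Real.sign (x i))
    (hζ2 : ∀ i, x i = 0 →
      d i = 0 ∨ (ζ i = Real.sign (d i) ∧ (ζ i = -1 ∨ ζ i = 1))) :
    (∃ abar : ℝ, 0 < abar ∧ ∀ α : ℝ, 0 < α → α ≤ abar →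
        (∑ i, |x i + α * d i|) = ∑ i, ζ i * (x i + α * d i))
      ∧ (∑ i, |x i|) = ∑ i, ζ i * x i := by
  have hne : (Finset.univ : Finset (Fin n)).Nonempty :=
    ⟨⟨0, hn⟩, Finset.mem_univ _⟩
  set f : Fin n → ℝ := fun i => if x i = 0 then 1 else |x i| / (2 * (|d i| + 1))
    with hf
  constructor
  · refine ⟨Finset.univ.inf' hne f, ?_, ?_⟩
    · rw [Finset.lt_inf'_iff]
      intro i _
      by_cases hxi : x i = 0
      · simp [hf, hxi]
      · have h1 : 0 < |x i| := abs_pos.mpr hxi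
        have h2 : (0:ℝ) < 2 * (|d i| + 1) := by positivity
        simp only [hf, if_neg hxi]
        positivity
    · intro α hα hle
      apply Finset.sum_congr rfl
      intro i _
      have hαi : α ≤ f i := le_trans hle (Finset.inf'_le _ (Finset.mem_univ i))
      by_cases hxi : x i = 0
      · rcases hζ2 i hxi with hdi | ⟨hz, _⟩
        · simp [hxi, hdi, abs_of_pos hα]
        · rcases lt_trichotomy (d i) 0 with hd | hd | hd
          · rw [hxi, hz, Real.sign_of_neg hd, zero_add,
              abs_of_neg (by nlinarith : α * d i < 0)]
            ring
          · simp [hxi, hd]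
          · rw [hxi, hz, Real.sign_of_pos hd, zero_add,
              abs_of_pos (by nlinarith : 0 < α * d i), one_mul]
      · have h2 : (0:ℝ) < 2 * (|d i| + 1) := by positivity
        have hαi' : α * (2 * (|d i| + 1)) ≤ |x i| := by
          rw [hf] at hαi
          simp only [if_neg hxi] at hαi
          exact (le_div_iff₀ h2).mp hαi
        have hkey : α * |d i| ≤ |x i| / 2 := by nlinarith [hα.le, abs_nonneg (d i)]
        have hmul : 0 ≤ α * (d i + |d i|) :=
          mul_nonneg hα.le (by nlinarith [neg_abs_le (d i)])
        have hmul2 : 0 ≤ α * (|d i| - d i) :=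
          mul_nonneg hα.le (by nlinarith [le_abs_self (d i)])
        rcases lt_trichotomy (x i) 0 with hx | hx | hx
        · have habs : |x i| = -x i := abs_of_neg hx
          have : x i + α * d i < 0 := by nlinarith
          rw [hζ1 i hxi, Real.sign_of_neg hx, abs_of_neg this]
          ring
        · exact absurd hx hxi
        · have habs : |x i| = x i := abs_of_pos hx
          have : 0 < x i + α * d i := by nlinarith
          rw [hζ1 i hxi, Real.sign_of_pos hx, abs_of_pos this, one_mul]
  · apply Finset.sum_congr rfl
    intro i _
    by_cases hxi : x i = 0
    · simp [hxi]
    · rcases lt_trichotomy (x i) 0 with hx | hx | hx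
      · rw [hζ1 i hxi, Real.sign_of_neg hx, abs_of_neg hx]; ring
      · exact absurd hx hxi
      · rw [hζ1 i hxi, Real.sign_of_pos hx, abs_of_pos hx, one_mul]
end

section
/- Let f : ℝⁿ → ℝ be convex and continuously differentiable, μ > 0, φ(x) = f(x) + μ‖x‖₁, and let x ∈ ℝⁿ. Define g(x) ∈ ℝⁿ componentwise by: gᵢ(x) = ∇ᵢf(x) + μ if xᵢ > 0, or if xᵢ = 0 and ∇ᵢf(x) + μ < 0; gᵢ(x) = ∇ᵢf(x) − μ if xᵢ < 0, or if xᵢ = 0 and ∇ᵢf(x) − μ > 0; and gᵢ(x) = 0 otherwise. Then (a) g(x) is a subgradient of φ at x, i.e. φ(y) ≥ φ(x) + ⟨g(x), y − x⟩ for all y ∈ ℝⁿ, and (b) for every v ∈ ℝⁿ satisfying φ(y) ≥ φ(x) + ⟨v, y − x⟩ for all y ∈ ℝⁿ, one has ‖g(x)‖₂ ≤ ‖v‖₂; that is, g(x) is the minimum Euclidean-norm subgradient of φ at x. -/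
/-!
Write `g = ∇f(x) + s`. Each `sᵢ` is a subgradient of `μ|·|` at `xᵢ`, so `g` is the sum of a
subgradient of `f` and one of `μ‖·‖₁`. Conversely, if `v` is a subgradient of `φ`, comparing
difference quotients along segments from `x` and letting the step tend to `0` shows that
`v - ∇f(x)` is a subgradient of `μ‖·‖₁`, i.e. each `vᵢ` lies in the interval
`∇ᵢf(x) + μ ∂|·|(xᵢ)`; `gᵢ` is the point of that interval closest to `0`.
-/

open scoped InnerProductSpace

open Filter Topology Set

section Subgradient

variable {E : Type*} [NormedAddCommGroup E] [InnerProductSpace ℝ E]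

def IsSubgradient (φ : E → ℝ) (x v : E) : Prop :=
  ∀ y, φ y ≥ φ x + ⟪v, y - x⟫_ℝ

lemma IsSubgradient.add {φ ψ : E → ℝ} {x v w : E} (hv : IsSubgradient φ x v)
    (hw : IsSubgradient ψ x w) : IsSubgradient (φ + ψ) x (v + w) := by
  intro y
  simp only [Pi.add_apply, inner_add_left]
  linarith [hv y, hw y]

lemma ConvexOn.sub_le_mul_sub {G : E → ℝ} (hG : ConvexOn ℝ univ G) (x d : E) {s : ℝ}
    (hs₀ : 0 ≤ s) (hs₁ : s ≤ 1) : G (x + s • d) - G x ≤ s * (G (x + d) - G x) := by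
  have h := hG.2 (mem_univ x) (mem_univ (x + d)) (sub_nonneg.2 hs₁) hs₀ (sub_add_cancel 1 s)
  have hpt : (1 - s) • x + s • (x + d) = x + s • d := by
    rw [smul_add, ← add_assoc, ← add_smul, sub_add_cancel, one_smul]
  rw [hpt, smul_eq_mul, smul_eq_mul] at h
  linarith

variable [CompleteSpace E]

lemma tendsto_slope_gradient {f : E → ℝ} {x : E} (hf : DifferentiableAt ℝ f x)
    (d : E) :
    Tendsto (fun s : ℝ => s⁻¹ * (f (x + s • d) - f x)) (𝓝[>] 0) (𝓝 ⟪gradient f x, d⟫_ℝ) := by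
  have hline : HasDerivAt (fun t : ℝ => x + t • d) d 0 := by
    simpa using ((hasDerivAt_id (0 : ℝ)).smul_const d).const_add x
  have hderiv : HasDerivAt (fun t : ℝ => f (x + t • d)) ⟪gradient f x, d⟫_ℝ 0 := by
    have hf' : HasFDerivAt f (InnerProductSpace.toDual ℝ E (gradient f x)) (x + (0 : ℝ) • d) := by
      simpa using hf.hasGradientAt.hasFDerivAt
    simpa [Function.comp_def] using hf'.comp_hasDerivAt (0 : ℝ) hline
  have := (hasDerivAt_iff_tendsto_slope.1 hderiv).mono_left (nhdsGT_le_nhdsNE 0)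
  refine this.congr fun s => ?_
  simp only [slope, vsub_eq_sub, sub_zero, zero_smul, add_zero, smul_eq_mul]

lemma ConvexOn.isSubgradient_gradient {f : E → ℝ} (hconv : ConvexOn ℝ univ f) {x : E}
    (hf : DifferentiableAt ℝ f x) : IsSubgradient f x (gradient f x) := by
  intro y
  have hslope : ∀ᶠ s in 𝓝[>] (0 : ℝ), s⁻¹ * (f (x + s • (y - x)) - f x) ≤ f y - f x := by
    filter_upwards [Ioc_mem_nhdsGT zero_lt_one] with s ⟨hs₀, hs₁⟩
    rw [inv_mul_le_iff₀ hs₀]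
    simpa using hconv.sub_le_mul_sub x (y - x) hs₀.le hs₁
  linarith [le_of_tendsto (tendsto_slope_gradient hf (y - x)) hslope]

lemma IsSubgradient.sub_gradient {f G : E → ℝ} {x v : E} (hv : IsSubgradient (f + G) x v)
    (hf : DifferentiableAt ℝ f x) (hG : ConvexOn ℝ univ G) :
    IsSubgradient G x (v - gradient f x) := by
  intro y
  have hslope : ∀ᶠ s in 𝓝[>] (0 : ℝ),
      ⟪v, y - x⟫_ℝ - s⁻¹ * (f (x + s • (y - x)) - f x) ≤ G y - G x := by
    filter_upwards [Ioc_mem_nhdsGT zero_lt_one] with s ⟨hs₀, hs₁⟩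
    have hchord := hG.sub_le_mul_sub x (y - x) hs₀.le hs₁
    have hsub := hv (x + s • (y - x))
    simp only [Pi.add_apply, add_sub_cancel_left, inner_smul_right, add_sub_cancel] at hsub hchord
    have hscaled : s * (⟪v, y - x⟫_ℝ - (G y - G x)) ≤ f (x + s • (y - x)) - f x := by linarith
    rw [← le_inv_mul_iff₀ hs₀] at hscaled
    linarith
  have hlim := ((tendsto_slope_gradient hf (y - x)).const_sub ⟪v, y - x⟫_ℝ)
  rw [inner_sub_left]
  linarith [le_of_tendsto hlim hslope]

end Subgradient

lemma mul_abs_subgradient_iff {μ a s : ℝ} :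
    (∀ b, μ * |a| + s * (b - a) ≤ μ * |b|) ↔ |s| ≤ μ ∧ s * a = μ * |a| := by
  constructor
  · intro h
    have h₀ := h 0
    have h₂ := h (2 * a)
    have hsa : s * a = μ * |a| := by
      rw [abs_mul, abs_two] at h₂
      simp only [abs_zero, mul_zero] at h₀
      linarith
    have hb : ∀ b, s * b ≤ μ * |b| := fun b => by linarith [h b]
    have h₁ := hb 1
    have hm₁ := hb (-1)
    simp only [mul_one, mul_neg, abs_one, abs_neg] at h₁ hm₁
    exact ⟨abs_le.2 ⟨by linarith, h₁⟩, hsa⟩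
  · rintro ⟨hs, hsa⟩ b
    have : s * b ≤ μ * |b| := (le_abs_self _).trans
      (by rw [abs_mul]; exact mul_le_mul_of_nonneg_right hs (abs_nonneg b))
    linarith

section L1

variable {ι : Type*} [Fintype ι]

lemma EuclideanSpace.inner_eq_sum_mul (v w : EuclideanSpace ℝ ι) : ⟪v, w⟫_ℝ = ∑ i, v i * w i := by
  simp [PiLp.inner_apply, mul_comm]

lemma isSubgradient_mul_l1_iff [DecidableEq ι] {μ : ℝ} {x w : EuclideanSpace ℝ ι} :
    IsSubgradient (fun y : EuclideanSpace ℝ ι => μ * ∑ i, |y i|) x w ↔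
      ∀ i, |w i| ≤ μ ∧ w i * x i = μ * |x i| := by
  simp only [← mul_abs_subgradient_iff]
  constructor
  · intro h i b
    have hy := h (x + EuclideanSpace.single i (b - x i))
    have hsum : ∑ j, |(x + EuclideanSpace.single i (b - x i)) j| = ∑ j, |x j| + (|b| - |x i|) := by
      have hdiff : ∑ j, (|(x + EuclideanSpace.single i (b - x i)) j| - |x j|) = |b| - |x i| := by
        rw [Finset.sum_eq_single i (fun j _ hj => by simp [hj]) (by simp)]
        simp
      rw [Finset.sum_sub_distrib] at hdiff
      linarith
    dsimp only at hy
    rw [add_sub_cancel_left, EuclideanSpace.inner_single_right, hsum, conj_trivial] at hy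
    linarith
  · intro h y
    have := Finset.sum_le_sum fun i (_ : i ∈ Finset.univ) => h i (y i)
    simp only [Finset.sum_add_distrib, ← Finset.mul_sum] at this
    simpa [EuclideanSpace.inner_eq_sum_mul] using this

lemma convexOn_mul_sum_abs {μ : ℝ} (hμ : 0 ≤ μ) :
    ConvexOn ℝ univ fun y : EuclideanSpace ℝ ι => μ * ∑ i, |y i| := by
  refine ⟨convex_univ, fun y _ z _ a b ha hb _ => ?_⟩
  have hcoord : ∀ i, |a * y i + b * z i| ≤ a * |y i| + b * |z i| := fun i => by
    simpa [abs_mul, abs_of_nonneg ha, abs_of_nonneg hb] using abs_add_le (a * y i) (b * z i)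
  have := Finset.sum_le_sum fun i (_ : i ∈ Finset.univ) => hcoord i
  simp only [Finset.sum_add_distrib, ← Finset.mul_sum] at this
  simp only [PiLp.add_apply, PiLp.smul_apply, smul_eq_mul]
  linarith [mul_le_mul_of_nonneg_left this hμ]

lemma EuclideanSpace.norm_le_norm_of_abs_le {u v : EuclideanSpace ℝ ι} (h : ∀ i, |u i| ≤ |v i|) :
    ‖u‖ ≤ ‖v‖ := by
  simp only [EuclideanSpace.norm_eq, Real.norm_eq_abs]
  exact Real.sqrt_le_sqrt (Finset.sum_le_sum fun i _ => pow_le_pow_left₀ (abs_nonneg _) (h i) 2)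

end L1

noncomputable def minNormSubgradCoord (μ a d : ℝ) : ℝ :=
  if 0 < a ∨ (a = 0 ∧ d + μ < 0) then d + μ
  else if a < 0 ∨ (a = 0 ∧ 0 < d - μ) then d - μ
  else 0

lemma minNormSubgradCoord_sub {μ : ℝ} (hμ : 0 ≤ μ) (a d : ℝ) :
    |minNormSubgradCoord μ a d - d| ≤ μ ∧ (minNormSubgradCoord μ a d - d) * a = μ * |a| := by
  unfold minNormSubgradCoord
  split_ifs with hpos hneg
  · rcases hpos with ha | ⟨rfl, _⟩
    · simp [abs_of_pos ha, abs_of_nonneg hμ]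
    · simp [abs_of_nonneg hμ]
  · rcases hneg with ha | ⟨rfl, _⟩
    · simp [abs_of_neg ha, abs_of_nonneg hμ]
    · simp [abs_of_nonneg hμ]
  · push Not at hpos hneg
    obtain rfl : a = 0 := le_antisymm hpos.1 hneg.1
    simp only [zero_sub, abs_neg, mul_zero, abs_zero, and_true]
    exact abs_le.2 ⟨by linarith [hpos.2 rfl], by linarith [hneg.2 rfl]⟩

lemma abs_minNormSubgradCoord_le {μ a d s : ℝ} (hs : |s| ≤ μ) (hsa : s * a = μ * |a|) :
    |minNormSubgradCoord μ a d| ≤ |d + s| := by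
  obtain ⟨hs₁, hs₂⟩ := abs_le.1 hs
  unfold minNormSubgradCoord
  split_ifs with hpos hneg
  · rcases hpos with ha | ⟨rfl, hlt⟩
    · rw [abs_of_pos ha] at hsa
      rw [mul_right_cancel₀ ha.ne' hsa]
    · rw [abs_of_neg hlt, abs_of_neg (by linarith)]
      linarith
  · rcases hneg with ha | ⟨rfl, hgt⟩
    · rw [abs_of_neg ha, mul_neg, ← neg_mul] at hsa
      rw [mul_right_cancel₀ ha.ne hsa, sub_eq_add_neg]
    · rw [abs_of_pos hgt, abs_of_pos (by linarith)]
      linarith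
  · simp

theorem stmt_14_general {n : ℕ}
    (f : EuclideanSpace ℝ (Fin n) → ℝ) (mu : ℝ) (hmu : 0 < mu)
    (hconv : ConvexOn ℝ Set.univ f)
    (hf : ContDiff ℝ 1 f)
    (φ : EuclideanSpace ℝ (Fin n) → ℝ)
    (hφ : ∀ y, φ y = f y + mu * ∑ i, |y i|)
    (x g : EuclideanSpace ℝ (Fin n))
    (hg : ∀ i : Fin n, g i =
      if 0 < x i ∨ (x i = 0 ∧ gradient f x i + mu < 0) then gradient f x i + mu
      else if x i < 0 ∨ (x i = 0 ∧ 0 < gradient f x i - mu) then gradient f x i - mu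
      else 0) :
    (∀ y, φ y ≥ φ x + ⟪g, y - x⟫_ℝ)
      ∧ ∀ v : EuclideanSpace ℝ (Fin n),
          (∀ y, φ y ≥ φ x + ⟪v, y - x⟫_ℝ) → ‖g‖ ≤ ‖v‖ := by
  have hdiff : DifferentiableAt ℝ f x := hf.differentiable one_ne_zero x
  have hφ_eq : φ = f + fun y => mu * ∑ i, |y i| := funext hφ
  have hg_coord : ∀ i, g i = minNormSubgradCoord mu (x i) (gradient f x i) := hg
  refine ⟨?_, fun v hv => ?_⟩
  · have hl1 : IsSubgradient (fun y => mu * ∑ i, |y i|) x (g - gradient f x) :=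
      isSubgradient_mul_l1_iff.2 fun i => by
        simpa [hg_coord i] using minNormSubgradCoord_sub hmu.le (x i) (gradient f x i)
    have hsum := (hconv.isSubgradient_gradient hdiff).add hl1
    rwa [add_sub_cancel, ← hφ_eq] at hsum
  · have hv' : IsSubgradient (f + fun y => mu * ∑ i, |y i|) x v := hφ_eq ▸ hv
    have hl1 := isSubgradient_mul_l1_iff.1 (hv'.sub_gradient hdiff (convexOn_mul_sum_abs hmu.le))
    refine EuclideanSpace.norm_le_norm_of_abs_le fun i => ?_
    have := abs_minNormSubgradCoord_le (d := gradient f x i) (hl1 i).1 (hl1 i).2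
    simpa [hg_coord i] using this

/-- the vector `g(x)` defined componentwise from the gradient of `f`
and `μ` is a subgradient of `φ = f + μ‖·‖₁` at `x`, and it has the minimum
Euclidean norm among all subgradients of `φ` at `x`. -/
theorem stmt_14 {n : ℕ} (hn : 0 < n)
    (f : EuclideanSpace ℝ (Fin n) → ℝ) (mu : ℝ) (hmu : 0 < mu)
    (hconv : ConvexOn ℝ Set.univ f)
    (hf : ContDiff ℝ 1 f)
    (φ : EuclideanSpace ℝ (Fin n) → ℝ)
    (hφ : ∀ y, φ y = f y + mu * ∑ i, |y i|)
    (x g : EuclideanSpace ℝ (Fin n))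
    (hg : ∀ i : Fin n, g i =
      if 0 < x i ∨ (x i = 0 ∧ gradient f x i + mu < 0) then gradient f x i + mu
      else if x i < 0 ∨ (x i = 0 ∧ 0 < gradient f x i - mu) then gradient f x i - mu
      else 0) :
    (∀ y, φ y ≥ φ x + ⟪g, y - x⟫_ℝ)
      ∧ ∀ v : EuclideanSpace ℝ (Fin n),
          (∀ y, φ y ≥ φ x + ⟪v, y - x⟫_ℝ) → ‖g‖ ≤ ‖v‖ :=
  stmt_14_general f mu hmu hconv hf φ hφ x g hg
end

section
/- Let f : ℝⁿ → ℝ be continuously differentiable with L-Lipschitz gradient (L > 0), μ > 0, and φ(x) = f(x) + μ‖x‖₁. For x ∈ ℝⁿ let x_ISTA = S_{μ/L}(x − (1/L)∇f(x)). Then φ(x_ISTA) ≤ Γ(x) ≤ φ(x), where Γ(x) = f(x) + ⟨∇f(x), x_ISTA − x⟩ + (L/2)‖x_ISTA − x‖₂² + μ‖x_ISTA‖₁; in particular the ISTA step does not increase the objective φ. -/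
/-!
The descent lemma (Lipschitz gradient) bounds `f` above by its quadratic model at `x`, which gives
`φ(x_ISTA) ≤ Γ`. The model plus `μ‖·‖₁` separates over coordinates, and in each coordinate the
soft-thresholded value is the exact minimiser (`S_α(a)` is the proximal point of `α|·|` at `a`);
comparing with the competitor `x` itself gives `Γ ≤ φ(x)`.
-/

open scoped InnerProductSpace

noncomputable def softThreshold (α a : ℝ) : ℝ := Real.sign a * max (|a| - α) 0

section SoftThreshold

variable {α : ℝ}

theorem abs_sub_softThreshold_le (hα : 0 ≤ α) (a : ℝ) : |a - softThreshold α a| ≤ α := by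
  unfold softThreshold
  rcases lt_trichotomy a 0 with ha | rfl | ha
  · rw [Real.sign_of_neg ha, abs_of_neg ha]
    rcases le_total (-a - α) 0 with h | h
    · rw [max_eq_right h, abs_le]; constructor <;> linarith
    · rw [max_eq_left h, abs_le]; constructor <;> linarith
  · simpa using hα
  · rw [Real.sign_of_pos ha, abs_of_pos ha]
    rcases le_total (a - α) 0 with h | h
    · rw [max_eq_right h, abs_le]; constructor <;> linarith
    · rw [max_eq_left h, abs_le]; constructor <;> linarith

theorem sub_softThreshold_mul_softThreshold (a : ℝ) :
    (a - softThreshold α a) * softThreshold α a = α * |softThreshold α a| := by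
  unfold softThreshold
  rcases lt_trichotomy a 0 with ha | rfl | ha
  · rw [Real.sign_of_neg ha, abs_of_neg ha]
    rcases le_total (-a - α) 0 with h | h
    · simp [max_eq_right h]
    · rw [max_eq_left h, abs_of_nonpos (by linarith)]; ring
  · simp
  · rw [Real.sign_of_pos ha, abs_of_pos ha]
    rcases le_total (a - α) 0 with h | h
    · simp [max_eq_right h]
    · rw [max_eq_left h, abs_of_nonneg (by linarith)]; ring

/-- Together, the two previous lemmas say `a - s ∈ α • ∂|·|(s)` for `s = softThreshold α a`,
the optimality condition of the proximal problem below. -/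
theorem softThreshold_prox_le (hα : 0 ≤ α) (a u : ℝ) :
    (softThreshold α a - a) ^ 2 / 2 + α * |softThreshold α a| ≤ (u - a) ^ 2 / 2 + α * |u| := by
  set s := softThreshold α a
  have hsub : (a - s) * u ≤ α * |u| :=
    calc (a - s) * u ≤ |a - s| * |u| := by rw [← abs_mul]; exact le_abs_self _
      _ ≤ α * |u| := by gcongr; exact abs_sub_softThreshold_le hα a
  nlinarith [sub_softThreshold_mul_softThreshold (α := α) a, sq_nonneg (u - s)]

theorem softThreshold_step_le {L mu : ℝ} (hL : 0 < L) (hmu : 0 ≤ mu) (g u : ℝ) :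
    g * (softThreshold (mu / L) (u - 1 / L * g) - u)
      + L / 2 * (softThreshold (mu / L) (u - 1 / L * g) - u) ^ 2
      + mu * |softThreshold (mu / L) (u - 1 / L * g)| ≤ mu * |u| := by
  set a := u - 1 / L * g
  have hg : g = L * (u - a) := by simp only [a]; field_simp; ring
  have hprox := mul_le_mul_of_nonneg_left (softThreshold_prox_le (div_nonneg hmu hL.le) a u) hL.le
  rw [mul_add, mul_add, ← mul_assoc, ← mul_assoc, mul_div_cancel₀ mu hL.ne'] at hprox
  rw [hg]
  linear_combination hprox

end SoftThreshold

section Descent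

variable {E : Type*} [NormedAddCommGroup E] [InnerProductSpace ℝ E] [CompleteSpace E]

theorem hasDerivAt_comp_add_smul_of_differentiable {f : E → ℝ} (hf : Differentiable ℝ f)
    (x d : E) (t : ℝ) :
    HasDerivAt (fun t : ℝ => f (x + t • d)) ⟪gradient f (x + t • d), d⟫_ℝ t := by
  have hline : HasDerivAt (fun t : ℝ => x + t • d) d t := by
    simpa using ((hasDerivAt_id t).smul_const d).const_add x
  simpa [Function.comp_def] using
    (hf (x + t • d)).hasGradientAt.hasFDerivAt.comp_hasDerivAt t hline

theorem le_add_inner_gradient_add_of_lipschitz_gradient {f : E → ℝ} {L : ℝ}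
    (hf : Differentiable ℝ f) (hlip : ∀ x y, ‖gradient f x - gradient f y‖ ≤ L * ‖x - y‖)
    (x y : E) :
    f y ≤ f x + ⟪gradient f x, y - x⟫_ℝ + L / 2 * ‖y - x‖ ^ 2 := by
  set d := y - x
  have hderiv_le (t : ℝ) (ht : 0 ≤ t) :
      ⟪gradient f (x + t • d), d⟫_ℝ ≤ ⟪gradient f x, d⟫_ℝ + t * (L * ‖d‖ ^ 2) := by
    have hgrad := hlip (x + t • d) x
    rw [add_sub_cancel_left, norm_smul, Real.norm_of_nonneg ht] at hgrad
    calc ⟪gradient f (x + t • d), d⟫_ℝ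
        = ⟪gradient f x, d⟫_ℝ + ⟪gradient f (x + t • d) - gradient f x, d⟫_ℝ := by
          rw [inner_sub_left]; ring
      _ ≤ ⟪gradient f x, d⟫_ℝ + ‖gradient f (x + t • d) - gradient f x‖ * ‖d‖ := by
          gcongr; exact real_inner_le_norm _ _
      _ ≤ ⟪gradient f x, d⟫_ℝ + L * (t * ‖d‖) * ‖d‖ := by gcongr
      _ = ⟪gradient f x, d⟫_ℝ + t * (L * ‖d‖ ^ 2) := by ring
  have hbound (t : ℝ) : HasDerivAt
      (fun t : ℝ => f x + t * ⟪gradient f x, d⟫_ℝ + t ^ 2 / 2 * (L * ‖d‖ ^ 2))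
      (⟪gradient f x, d⟫_ℝ + t * (L * ‖d‖ ^ 2)) t := by
    refine HasDerivAt.congr_deriv ((((hasDerivAt_id' t).mul_const _).const_add (f x)).add
      (((hasDerivAt_pow 2 t).div_const 2).mul_const (L * ‖d‖ ^ 2))) ?_
    ring
  have hline := hasDerivAt_comp_add_smul_of_differentiable hf x d
  have key := image_le_of_deriv_right_le_deriv_boundary
    (fun t _ => (hline t).continuousAt.continuousWithinAt) (fun t _ => (hline t).hasDerivWithinAt)
    (by simp) (fun t _ => (hbound t).continuousAt.continuousWithinAt)
    (fun t _ => (hbound t).hasDerivWithinAt) (fun t ht => hderiv_le t ht.1)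
    (Set.right_mem_Icc.2 zero_le_one)
  simp only [one_smul, add_sub_cancel, one_mul, one_pow, d] at key
  linarith

end Descent

theorem inner_add_sq_norm_add_sum_abs_softThreshold_le {ι : Type*} [Fintype ι] {L mu : ℝ}
    (hL : 0 < L) (hmu : 0 ≤ mu) (g u s : EuclideanSpace ℝ ι)
    (hs : ∀ i, s i = softThreshold (mu / L) (u i - 1 / L * g i)) :
    ⟪g, s - u⟫_ℝ + L / 2 * ‖s - u‖ ^ 2 + mu * ∑ i, |s i| ≤ mu * ∑ i, |u i| := by
  have hcoord (i : ι) :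
      g i * (s i - u i) + L / 2 * (s i - u i) ^ 2 + mu * |s i| ≤ mu * |u i| := by
    rw [hs i]; exact softThreshold_step_le hL hmu (g i) (u i)
  simp only [PiLp.inner_apply, EuclideanSpace.real_norm_sq_eq, Finset.mul_sum,
    ← Finset.sum_add_distrib, PiLp.sub_apply, RCLike.inner_apply, conj_trivial]
  exact Finset.sum_le_sum fun i _ => by linarith [hcoord i]

theorem stmt_16_general {n : ℕ}
    (f : EuclideanSpace ℝ (Fin n) → ℝ)
    (L mu : ℝ) (hL : 0 < L) (hmu : 0 < mu)
    (hf : ContDiff ℝ 1 f)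
    (hlip : ∀ x y : EuclideanSpace ℝ (Fin n),
      ‖gradient f x - gradient f y‖ ≤ L * ‖x - y‖)
    (φ : EuclideanSpace ℝ (Fin n) → ℝ)
    (hφ : ∀ y, φ y = f y + mu * ∑ i, |y i|)
    (x xISTA : EuclideanSpace ℝ (Fin n))
    (hxISTA : ∀ i : Fin n,
      xISTA i = Real.sign (x i - (1 / L) * gradient f x i) *
        max (|x i - (1 / L) * gradient f x i| - mu / L) 0)
    (Γ : ℝ)
    (hΓ : Γ = f x + ⟪gradient f x, xISTA - x⟫_ℝ + L / 2 * ‖xISTA - x‖ ^ 2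
      + mu * ∑ i, |xISTA i|) :
    φ xISTA ≤ Γ ∧ Γ ≤ φ x := by
  have hdescent := le_add_inner_gradient_add_of_lipschitz_gradient
    (hf.differentiable one_ne_zero) hlip x xISTA
  have hmodel := inner_add_sq_norm_add_sum_abs_softThreshold_le hL hmu.le
    (gradient f x) x xISTA hxISTA
  rw [hΓ, hφ, hφ]
  constructor <;> linarith

/-- the ISTA step `x_ISTA = S_{μ/L}(x − (1/L)∇f(x))` satisfies
`φ(x_ISTA) ≤ Γ(x) ≤ φ(x)`, where `Γ(x)` is the value of the proximal upper
model at `x_ISTA`; in particular the ISTA step does not increase `φ`. -/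
theorem stmt_16 {n : ℕ} (hn : 0 < n)
    (f : EuclideanSpace ℝ (Fin n) → ℝ)
    (L mu : ℝ) (hL : 0 < L) (hmu : 0 < mu)
    (hf : ContDiff ℝ 1 f)
    (hlip : ∀ x y : EuclideanSpace ℝ (Fin n),
      ‖gradient f x - gradient f y‖ ≤ L * ‖x - y‖)
    (φ : EuclideanSpace ℝ (Fin n) → ℝ)
    (hφ : ∀ y, φ y = f y + mu * ∑ i, |y i|)
    (x xISTA : EuclideanSpace ℝ (Fin n))
    (hxISTA : ∀ i : Fin n,
      xISTA i = Real.sign (x i - (1 / L) * gradient f x i) *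
        max (|x i - (1 / L) * gradient f x i| - mu / L) 0)
    (Γ : ℝ)
    (hΓ : Γ = f x + ⟪gradient f x, xISTA - x⟫_ℝ + L / 2 * ‖xISTA - x‖ ^ 2
      + mu * ∑ i, |xISTA i|) :
    φ xISTA ≤ Γ ∧ Γ ≤ φ x :=
  stmt_16_general f L mu hL hmu hf hlip φ hφ x xISTA hxISTA Γ hΓ
end
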